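/- Assume p ≥ 1 and let t, r be natural numbers with r ≥ 1. Suppose there exists x̃ ∈ ℤ^q with ‖B·x̃ − y‖_p^p ≤ t. Then for every z ∈ ℤ^{h+g} with ‖B_BCH·z − s‖_p^p = r, the vector u_z := B_int·(x̃ ∘ z ∘ (−1)) = (2B·x̃ − 2y) ∘ (B_BCH·z − s) is a nonzero element of the lattice L(B_int) with ‖u_z‖_p^p ≤ 2^p·t + r, and the map z ↦ u_z is injective. In particular, if there are at least N distinct vectors z ∈ ℤ^{h+g} with ‖B_BCH·z − s‖_p^p = r, then L(B_int) contains at least N distinct nonzero vectors u with ‖u‖_p^p ≤ 2^p·t + r. -/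

import Mathlib

/-- The BCH gadget lattice basis `B_BCH = [[Id_h, 0], [l·P, 2l·Id_g]]`. -/
def BBCH (g h l : ℕ) (P : Matrix (Fin g) (Fin h) ℤ) :
    Matrix (Fin h ⊕ Fin g) (Fin h ⊕ Fin g) ℤ :=
  Matrix.fromBlocks 1 0 ((l : ℤ) • P) ((2 * l : ℤ) • 1)

/-- The intermediate lattice basis `B_int = [[2B, 0, 2y], [0, B_BCH, s]]`. -/
def Bint (n q g h l : ℕ) (B : Matrix (Fin n) (Fin q) ℤ) (y : Fin n → ℤ)
    (P : Matrix (Fin g) (Fin h) ℤ) (s : Fin h ⊕ Fin g → ℤ) :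
    Matrix (Fin n ⊕ (Fin h ⊕ Fin g)) ((Fin q ⊕ (Fin h ⊕ Fin g)) ⊕ Unit) ℤ :=
  Matrix.of fun i j =>
    match i, j with
    | Sum.inl i, Sum.inl (Sum.inl j) => 2 * B i j
    | Sum.inl _, Sum.inl (Sum.inr _) => 0
    | Sum.inl i, Sum.inr _ => 2 * y i
    | Sum.inr _, Sum.inl (Sum.inl _) => 0
    | Sum.inr i, Sum.inl (Sum.inr j) => BBCH g h l P i j
    | Sum.inr i, Sum.inr _ => s i

/-- The lattice vector `u_z = B_int · (x̃ ∘ z ∘ (−1))`. -/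
def uvec (n q g h l : ℕ) (B : Matrix (Fin n) (Fin q) ℤ) (y : Fin n → ℤ)
    (P : Matrix (Fin g) (Fin h) ℤ) (s : Fin h ⊕ Fin g → ℤ)
    (xt : Fin q → ℤ) (z : Fin h ⊕ Fin g → ℤ) : Fin n ⊕ (Fin h ⊕ Fin g) → ℤ :=
  (Bint n q g h l B y P s).mulVec (Sum.elim (Sum.elim xt z) fun _ => (-1 : ℤ))

/-!
The last coordinate `-1` of `x̃ ∘ z ∘ (-1)` makes `u_z` the concatenation of `2(B x̃ - y)` and
`B_BCH z - s`, so `‖u_z‖_p^p = 2^p ‖B x̃ - y‖_p^p + ‖B_BCH z - s‖_p^p ≤ 2^p t + r`, and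
`u_z ≠ 0` because its second block has positive norm `r`. Since `B_BCH` is block lower
triangular with determinant `(2l)^g ≠ 0`, `z ↦ B_BCH z - s`, hence `z ↦ u_z`, is injective.
-/

theorem sum_abs_mul_rpow {ι : Type*} [Fintype ι] (c : ℝ) (v : ι → ℝ) (p : ℝ) :
    ∑ i, |c * v i| ^ p = |c| ^ p * ∑ i, |v i| ^ p := by
  simp only [abs_mul, Real.mul_rpow (abs_nonneg c) (abs_nonneg _), Finset.mul_sum]

theorem ne_zero_of_sum_abs_rpow_ne_zero {ι : Type*} [Fintype ι] {p : ℝ} (hp : p ≠ 0)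
    {v : ι → ℤ} (hv : ∑ i, |(v i : ℝ)| ^ p ≠ 0) : v ≠ 0 := by
  rintro rfl
  simp [Real.zero_rpow hp] at hv

theorem det_BBCH (g h l : ℕ) (P : Matrix (Fin g) (Fin h) ℤ) :
    (BBCH g h l P).det = (2 * l : ℤ) ^ g := by
  rw [BBCH, Matrix.det_fromBlocks_zero₁₂, Matrix.det_one, Matrix.det_smul, Matrix.det_one]
  simp

theorem BBCH_mulVec_injective {g h l : ℕ} (hl : 0 < l) (P : Matrix (Fin g) (Fin h) ℤ) :
    Function.Injective (BBCH g h l P).mulVec :=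
  Matrix.mulVec_injective_of_det_ne_zero (by rw [det_BBCH]; positivity)

section uvec

variable {n q g h l : ℕ} (B : Matrix (Fin n) (Fin q) ℤ) (y : Fin n → ℤ)
  (P : Matrix (Fin g) (Fin h) ℤ) (s : Fin h ⊕ Fin g → ℤ) (xt : Fin q → ℤ)

theorem uvec_eq (z : Fin h ⊕ Fin g → ℤ) :
    uvec n q g h l B y P s xt z =
      Sum.elim (2 • B.mulVec xt - 2 • y) ((BBCH g h l P).mulVec z - s) := by
  funext i
  rcases i with i | i
  · simp [uvec, Bint, Matrix.mulVec, dotProduct, Fintype.sum_sum_type, Finset.mul_sum, mul_assoc]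
    ring
  · simp [uvec, Bint, Matrix.mulVec, dotProduct, Fintype.sum_sum_type]
    ring

theorem uvec_injective (hl : 0 < l) : Function.Injective (uvec n q g h l B y P s xt) := by
  intro z₁ z₂ hu
  rw [uvec_eq, uvec_eq] at hu
  exact BBCH_mulVec_injective hl P (sub_left_injective (Sum.elim_eq_iff.mp hu).2)

theorem sum_abs_rpow_uvec (p : ℝ) (z : Fin h ⊕ Fin g → ℤ) :
    ∑ i, |(uvec n q g h l B y P s xt z i : ℝ)| ^ p =
      2 ^ p * ∑ i, |((B.mulVec xt - y) i : ℝ)| ^ p +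
        ∑ i, |(((BBCH g h l P).mulVec z - s) i : ℝ)| ^ p := by
  have hfirst : ∀ i,
      (((2 • B.mulVec xt - 2 • y) i : ℤ) : ℝ) = 2 * ((B.mulVec xt - y) i : ℝ) := by
    intro i
    simp only [two_smul, Pi.sub_apply, Pi.add_apply]
    push_cast
    ring
  simp only [uvec_eq, Fintype.sum_sum_type, Sum.elim_inl, Sum.elim_inr, hfirst,
    sum_abs_mul_rpow, abs_two]

end uvec

theorem stmt15 (n q g h l : ℕ)
    (hl : 0 < l) (p : ℝ) (hp : 1 ≤ p) (t r : ℕ) (hr : 1 ≤ r)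
    (B : Matrix (Fin n) (Fin q) ℤ) (y : Fin n → ℤ)
    (P : Matrix (Fin g) (Fin h) ℤ) (s : Fin h ⊕ Fin g → ℤ)
    (xt : Fin q → ℤ) (hxt : ∑ i, |((B.mulVec xt - y) i : ℝ)| ^ p ≤ (t : ℝ)) :
    (∀ z : Fin h ⊕ Fin g → ℤ,
      (∑ i, |(((BBCH g h l P).mulVec z - s) i : ℝ)| ^ p) = (r : ℝ) →
        uvec n q g h l B y P s xt z =
          Sum.elim (2 • B.mulVec xt - 2 • y) ((BBCH g h l P).mulVec z - s) ∧
        uvec n q g h l B y P s xt z ≠ 0 ∧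
        (∃ xx, uvec n q g h l B y P s xt z = (Bint n q g h l B y P s).mulVec xx) ∧
        ∑ i, |(uvec n q g h l B y P s xt z i : ℝ)| ^ p ≤ (2 : ℝ) ^ p * t + r) ∧
    Set.InjOn (uvec n q g h l B y P s xt)
      {z | (∑ i, |(((BBCH g h l P).mulVec z - s) i : ℝ)| ^ p) = (r : ℝ)} ∧
    (∀ Z : Finset (Fin h ⊕ Fin g → ℤ),
      (∀ z ∈ Z, (∑ i, |(((BBCH g h l P).mulVec z - s) i : ℝ)| ^ p) = (r : ℝ)) →
      ∃ U : Finset (Fin n ⊕ (Fin h ⊕ Fin g) → ℤ),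
        Z.card ≤ U.card ∧ ∀ u ∈ U, u ≠ 0 ∧
          (∃ xx, u = (Bint n q g h l B y P s).mulVec xx) ∧
          ∑ i, |(u i : ℝ)| ^ p ≤ (2 : ℝ) ^ p * t + r) := by
  have hinj := uvec_injective B y P s xt hl
  have hz_good : ∀ z : Fin h ⊕ Fin g → ℤ,
      (∑ i, |(((BBCH g h l P).mulVec z - s) i : ℝ)| ^ p) = (r : ℝ) →
        uvec n q g h l B y P s xt z ≠ 0 ∧
        (∃ xx, uvec n q g h l B y P s xt z = (Bint n q g h l B y P s).mulVec xx) ∧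
        ∑ i, |(uvec n q g h l B y P s xt z i : ℝ)| ^ p ≤ (2 : ℝ) ^ p * t + r := by
    intro z hz
    have hr_pos : (r : ℝ) ≠ 0 := by positivity
    refine ⟨?_, ⟨_, rfl⟩, ?_⟩
    · rw [uvec_eq]
      exact fun h0 => ne_zero_of_sum_abs_rpow_ne_zero (by positivity) (hz ▸ hr_pos)
        (Sum.elim_eq_iff.mp (h0.trans (Sum.elim_zero_zero).symm)).2
    · rw [sum_abs_rpow_uvec, hz]
      gcongr
  refine ⟨fun z hz => ⟨uvec_eq B y P s xt z, hz_good z hz⟩, hinj.injOn, fun Z hZ => ?_⟩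
  refine ⟨Z.image (uvec n q g h l B y P s xt), (Finset.card_image_of_injective Z hinj).ge, ?_⟩
  simp only [Finset.mem_image, forall_exists_index, and_imp]
  rintro _ z hzZ rfl
  exact hz_good z (hZ z hzZ)
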